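/- arXiv:0809.4792 — 7 statements merged into one kernel-verified Lean document; each statement's English description precedes it below -/
import Mathlib

section
/- Let s be a strategy profile of an unweighted Facility Location game, let i be an agent with s_i = v, and let k = |{j : s_j = v}| ≥ 1. Let s' be a profile agreeing with s except that s'_i = v' for some node v' ≠ v, and suppose the deviation is improving: c_i(s') < c_i(s). Then the social cost change satisfies c(s') − c(s) ≤ β_v/k if k ≥ 2, and c(s') − c(s) ≤ 0 if k = 1. -/
open Finset
open scoped Classical

/-- A Facility Location game: nodes `V`, agents `A`, connection costs `d`,
facility opening costs `β`, agent locations `u` and positive weights `w`. -/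
structure FLGame (V A : Type*) [Fintype V] [Fintype A] where
  d : V → V → ℝ
  d_nonneg : ∀ x y, 0 ≤ d x y
  β : V → ℝ
  β_nonneg : ∀ v, 0 ≤ β v
  u : A → V
  w : A → ℝ
  w_pos : ∀ i, 0 < w i
  V_nonempty : Nonempty V
  A_nonempty : Nonempty A

namespace FLGame

variable {V A : Type*} [Fintype V] [Fintype A]

/-- Total weight forwarded to node `v` under profile `s`. -/
noncomputable def Wmass (G : FLGame V A) (s : A → V) (v : V) : ℝ :=
  ∑ j, if s j = v then G.w j else 0

/-- Individual cost of agent `i` under profile `s`. -/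
noncomputable def cost (G : FLGame V A) (s : A → V) (i : A) : ℝ :=
  G.w i * G.d (G.u i) (s i) + G.w i * G.β (s i) / G.Wmass s (s i)

/-- Social cost of profile `s`. -/
noncomputable def social (G : FLGame V A) (s : A → V) : ℝ := ∑ i, G.cost s i

/-- All agents have unit weight. -/
def Unweighted (G : FLGame V A) : Prop := ∀ i, G.w i = 1

/-- `d` is a metric on `V`. -/
def Metric (G : FLGame V A) : Prop :=
  (∀ x, G.d x x = 0) ∧ (∀ x y, G.d x y = G.d y x) ∧ (∀ x y, 0 ≤ G.d x y) ∧
    (∀ x y z, G.d x z ≤ G.d x y + G.d y z)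

/-- `s'` is obtained from `s` by a best-response move of agent `i`. -/
def BRMove (G : FLGame V A) (s s' : A → V) (i : A) : Prop :=
  (∀ j, j ≠ i → s' j = s j) ∧ G.cost s' i < G.cost s i ∧
    (∀ s'' : A → V, (∀ j, j ≠ i → s'' j = s j) → G.cost s' i ≤ G.cost s'' i)

/-- `s` is reached from `s0` by iterative best response. -/
def ReachedByIBR (G : FLGame V A) (s0 s : A → V) : Prop :=
  ∃ (T : ℕ) (seq : ℕ → A → V), seq 0 = s0 ∧ seq T = s ∧
    ∀ t, t < T → ∃ i, G.BRMove (seq t) (seq (t + 1)) i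

/-- `s` is a pure Nash equilibrium. -/
def IsPNE (G : FLGame V A) (s : A → V) : Prop :=
  ∀ (i : A) (v : V), G.cost s i ≤ G.cost (Function.update s i v) i

/-- The nonempty coalition `I` deviates from `s` to `s'`, every member improving
by a factor strictly more than `α`. -/
def CoalDev (G : FLGame V A) (α : ℝ) (s s' : A → V) (I : Finset A) : Prop :=
  I.Nonempty ∧ (∀ j ∉ I, s' j = s j) ∧ ∀ i ∈ I, α * G.cost s' i < G.cost s i

/-- `s` is an `α`-approximate strong equilibrium. -/
def ApproxSE (G : FLGame V A) (α : ℝ) (s : A → V) : Prop :=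
  ¬ ∃ (I : Finset A) (s' : A → V), G.CoalDev α s s' I

end FLGame


section Aux

open Finset

variable {V A : Type*} [Fintype V] [Fintype A]

lemma flaux_sum_sub_single [DecidableEq A] (f g : A → ℝ) (i : A)
    (h : ∀ j, j ≠ i → f j = g j) :
    (∑ j, f j) - (∑ j, g j) = f i - g i := by
  rw [← Finset.sum_sub_distrib, Finset.sum_eq_single i]
  · intro b _ hb; rw [h b hb]; ring
  · intro h'; exact absurd (Finset.mem_univ i) h'

lemma flaux_wmass (G : FLGame V A) (hU : G.Unweighted) (s : A → V) (x : V) :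
    G.Wmass s x = ((Finset.univ.filter (fun j => s j = x)).card : ℝ) := by
  have hU' : ∀ j, G.w j = 1 := hU
  unfold FLGame.Wmass
  simp only [hU']
  rw [Finset.sum_boole]

lemma flaux_social (G : FLGame V A) (hU : G.Unweighted) (s : A → V) :
    G.social s = (∑ j, G.d (G.u j) (s j)) +
      ∑ x, (if (Finset.univ.filter (fun j => s j = x)).card = 0 then 0 else G.β x) := by
  classical
  unfold FLGame.social FLGame.cost
  have hU' : ∀ j, G.w j = 1 := hU
  rw [Finset.sum_add_distrib]
  simp only [hU', one_mul]
  congr 1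
  rw [← Finset.sum_fiberwise Finset.univ s (fun j => G.β (s j) / G.Wmass s (s j))]
  refine Finset.sum_congr rfl (fun x _ => ?_)
  rcases Nat.eq_zero_or_pos (Finset.univ.filter (fun j => s j = x)).card with h | h
  · rw [Finset.card_eq_zero] at h
    simp [h]
  · rw [if_neg (by omega)]
    have hcongr : ∀ j ∈ Finset.univ.filter (fun j => s j = x),
        G.β (s j) / G.Wmass s (s j)
          = G.β x / ((Finset.univ.filter (fun j => s j = x)).card : ℝ) := by
      intro j hj
      rw [Finset.mem_filter] at hj
      rw [hj.2, flaux_wmass G hU]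
    rw [Finset.sum_congr rfl hcongr, Finset.sum_const, nsmul_eq_mul]
    have hne : ((Finset.univ.filter (fun j => s j = x)).card : ℝ) ≠ 0 := by
      exact_mod_cast h.ne' 
    field_simp

end Aux

/-- In an unweighted game, an improving unilateral deviation of agent `i`
from `v` (shared by `k` agents) to `v' ≠ v` increases the social cost by at most
`β_v / k` when `k ≥ 2`, and does not increase it when `k = 1`. -/
theorem stmt3 {V A : Type*} [Fintype V] [Fintype A] [DecidableEq A] (G : FLGame V A)
    (hU : G.Unweighted) (s : A → V) (i : A) (v v' : V)
    (hv : s i = v) (hvv' : v' ≠ v) (s' : A → V) (hs' : s' = Function.update s i v')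
    (himp : G.cost s' i < G.cost s i) :
    (2 ≤ (Finset.univ.filter (fun j => s j = v)).card →
      G.social s' - G.social s ≤
        G.β v / ((Finset.univ.filter (fun j => s j = v)).card : ℝ)) ∧
    ((Finset.univ.filter (fun j => s j = v)).card = 1 →
      G.social s' - G.social s ≤ 0) := by
  classical
  have hi : i ∈ Finset.univ.filter (fun j => s j = v) := by simp [hv]
  set k := (Finset.univ.filter (fun j => s j = v)).card with hk
  set m := (Finset.univ.filter (fun j => s j = v')).card with hm
  have hk1 : 1 ≤ k := Finset.card_pos.mpr ⟨i, hi⟩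
  have hs'i : s' i = v' := by rw [hs']; simp
  have hs'j : ∀ j, j ≠ i → s' j = s j := by
    intro j hj; rw [hs']; simp [Function.update_of_ne hj]
  -- fibers
  have hfibv : Finset.univ.filter (fun j => s' j = v)
      = (Finset.univ.filter (fun j => s j = v)).erase i := by
    ext j
    simp only [Finset.mem_filter, Finset.mem_erase, Finset.mem_univ, true_and]
    constructor
    · intro hjv
      have hji : j ≠ i := by rintro rfl; rw [hs'i] at hjv; exact hvv' hjv
      exact ⟨hji, by rwa [hs'j j hji] at hjv⟩
    · rintro ⟨hji, hjv⟩; rwa [hs'j j hji]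
  have hfibv' : Finset.univ.filter (fun j => s' j = v')
      = insert i (Finset.univ.filter (fun j => s j = v')) := by
    ext j
    simp only [Finset.mem_filter, Finset.mem_insert, Finset.mem_univ, true_and]
    constructor
    · intro hjv
      by_cases hji : j = i
      · exact Or.inl hji
      · exact Or.inr (by rwa [hs'j j hji] at hjv)
    · rintro (rfl | hjv)
      · exact hs'i
      · have hji : j ≠ i := by rintro rfl; rw [hv] at hjv; exact hvv' hjv.symm
        rwa [hs'j j hji]
  have hfibo : ∀ x, x ≠ v → x ≠ v' →
      Finset.univ.filter (fun j => s' j = x) = Finset.univ.filter (fun j => s j = x) := by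
    intro x hxv hxv'
    ext j
    simp only [Finset.mem_filter, Finset.mem_univ, true_and]
    by_cases hji : j = i
    · subst hji; rw [hs'i, hv]
      constructor
      · intro h; exact absurd h.symm hxv'
      · intro h; exact absurd h.symm hxv
    · rw [hs'j j hji]
  have hinotin : i ∉ Finset.univ.filter (fun j => s j = v') := by
    simp only [Finset.mem_filter, Finset.mem_univ, true_and, hv]
    exact fun h => hvv' h.symm
  have hcardv : (Finset.univ.filter (fun j => s' j = v)).card = k - 1 := by
    rw [hfibv, Finset.card_erase_of_mem hi]
  have hcardv' : (Finset.univ.filter (fun j => s' j = v')).card = m + 1 := by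
    rw [hfibv', Finset.card_insert_of_notMem hinotin]
  -- cost inequality unfolded
  have hcosts : G.d (G.u i) v' + G.β v' / ((m : ℝ) + 1)
      < G.d (G.u i) v + G.β v / (k : ℝ) := by
    have h1 : G.cost s' i = G.d (G.u i) v' + G.β v' / ((m : ℝ) + 1) := by
      unfold FLGame.cost
      rw [hs'i, flaux_wmass G hU, hcardv', hU i]
      push_cast
      ring
    have h2 : G.cost s i = G.d (G.u i) v + G.β v / (k : ℝ) := by
      unfold FLGame.cost
      rw [hv, flaux_wmass G hU, ← hk, hU i]
      ring
    rw [h1, h2] at himp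
    exact himp
  -- social cost difference
  set F : (A → V) → V → ℝ :=
    fun t x => if (Finset.univ.filter (fun j => t j = x)).card = 0 then 0 else G.β x with hF
  have hdiff : G.social s' - G.social s
      = (G.d (G.u i) v' - G.d (G.u i) v) + ((F s' v - F s v) + (F s' v' - F s v')) := by
    rw [flaux_social G hU s', flaux_social G hU s]
    have hd : (∑ j, G.d (G.u j) (s' j)) - (∑ j, G.d (G.u j) (s j))
        = G.d (G.u i) v' - G.d (G.u i) v := by
      rw [flaux_sum_sub_single _ _ i (fun j hj => by rw [hs'j j hj]), hs'i, hv]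
    have hb : (∑ x, F s' x) - (∑ x, F s x)
        = (F s' v - F s v) + (F s' v' - F s v') := by
      rw [← Finset.sum_sub_distrib]
      have hsub : ({v, v'} : Finset V) ⊆ Finset.univ := Finset.subset_univ _
      rw [← Finset.sum_subset hsub ?_]
      · rw [Finset.sum_pair (fun h => hvv' h.symm)]
      · intro x _ hx
        simp only [Finset.mem_insert, Finset.mem_singleton, not_or] at hx
        rw [hF]; simp only
        rw [hfibo x hx.1 hx.2]
        ring
    linarith [hd, hb]
  have hFsv : F s v = G.β v := by
    rw [hF]; simp only [← hk]
    rw [if_neg (by omega)]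
  have hFs'v' : F s' v' = G.β v' := by
    rw [hF]; simp only [hcardv']
    rw [if_neg (by omega)]
  have hFsv'le : G.β v' - F s v' ≤ G.β v' / ((m : ℝ) + 1) := by
    rw [hF]; simp only [← hm]
    by_cases hm0 : m = 0
    · rw [if_pos hm0, hm0]
      simp
    · rw [if_neg hm0]
      have h1 : (0:ℝ) ≤ G.β v' / ((m:ℝ)+1) := div_nonneg (G.β_nonneg v') (by positivity)
      linarith
  have hkpos : (0:ℝ) < (k : ℝ) := by exact_mod_cast hk1
  constructor
  · intro hk2
    have hFs'v : F s' v = G.β v := by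
      rw [hF]; simp only [hcardv']
      simp only [hcardv]
      rw [if_neg (by omega)]
    rw [hdiff, hFsv, hFs'v, hFs'v']
    have := hFsv'le
    linarith [hcosts]
  · intro hk1'
    have hFs'v : F s' v = 0 := by
      rw [hF]; simp only [hcardv]
      rw [if_pos (by omega)]
    rw [hdiff, hFsv, hFs'v, hFs'v']
    have hkone : (k : ℝ) = 1 := by exact_mod_cast hk1'
    rw [hkone] at hcosts
    have := hFsv'le
    linarith [hcosts]
end

section
/- Consider a Facility Location game with β_v > 0 for all nodes v, and let α ≥ 1. For a coalitional deviation from profile s^j to profile s^{j+1} by a nonempty coalition I_j (meaning s^{j+1}_i = s^j_i for all i ∉ I_j and c_i(s^j) > α·c_i(s^{j+1}) for every i ∈ I_j), define the weighted damage dam(I_j) = Π_{i ∉ I_j} (c_i(s^{j+1})/c_i(s^j))^{w_i}, and for a set I of agents let W(I) = Σ_{i ∈ I} w_i. Suppose that for every cycle of profiles s^1, …, s^k with s^1 = s^k, k ≥ 2, formed by consecutive such coalitional deviations of coalitions I_1, …, I_{k−1}, it holds that α ≥ max_{1 ≤ j ≤ k−1} dam(I_j)^{1/W(I_j)}. Then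 the game has an α-approximate strong equilibrium. -/
open Finset
open scoped Classical

/-!
The weighted Nash product `Φ(s) = ∏ᵢ cᵢ(s) ^ wᵢ` is a potential for deviations whose damage is
bounded by `α`: the coalition shrinks `Φ` by a factor below `α ^ (-W(I))`, the others enlarge it
by the damage `dam(I) ≤ α ^ W(I)`, so `Φ` strictly decreases (positive opening costs keep all
costs, hence all ratios, positive). If no `α`-approximate strong equilibrium existed, choosing a
deviation from every profile would give a self-map of the finite set of profiles, which has a
periodic orbit: a cycle of deviations along which `Φ` strictly decreases, which is absurd.
-/

open Finset Function Real

theorem Function.exists_isPeriodicPt_of_finite {α : Type*} [Finite α] [Nonempty α] (f : α → α) :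
    ∃ x n, 0 < n ∧ IsPeriodicPt f n x := by
  obtain ⟨a, b, hab, heq⟩ :=
    Finite.exists_ne_map_eq_of_infinite fun n => f^[n] (Classical.arbitrary α)
  wlog hlt : a < b generalizing a b
  · exact this b a hab.symm heq.symm (by omega)
  refine ⟨f^[a] (Classical.arbitrary α), b - a, Nat.sub_pos_of_lt hlt, ?_⟩
  rw [IsPeriodicPt, IsFixedPt, ← iterate_add_apply, Nat.sub_add_cancel hlt.le]
  exact heq.symm

theorem prod_rpow_lt_one_of_damage_le {ι : Type*} [Fintype ι] [DecidableEq ι] {I : Finset ι}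
    (hI : I.Nonempty) {w r : ι → ℝ} (hw : ∀ i, 0 < w i) (hr : ∀ i, 0 < r i) {α : ℝ}
    (hgain : ∀ i ∈ I, α * r i < 1)
    (hdam : (∏ i ∈ univ \ I, r i ^ w i) ^ (1 / ∑ i ∈ I, w i) ≤ α) :
    ∏ i, r i ^ w i < 1 := by
  set W := ∑ i ∈ I, w i
  set D := ∏ i ∈ univ \ I, r i ^ w i
  have hW : 0 < W := sum_pos (fun i _ => hw i) hI
  have hD : 0 < D := prod_pos fun i _ => rpow_pos_of_pos (hr i) _
  have hα : 0 < α := (rpow_pos_of_pos hD _).trans_le hdam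
  have hDle : D ≤ α ^ W := by
    rw [one_div] at hdam
    exact (rpow_inv_le_iff_of_pos hD.le hα.le hW).1 hdam
  have hαr : ∀ i, 0 < α * r i := fun i => mul_pos hα (hr i)
  have hcoalition : α ^ W * ∏ i ∈ I, r i ^ w i < 1 :=
    calc α ^ W * ∏ i ∈ I, r i ^ w i = ∏ i ∈ I, (α * r i) ^ w i := by
          rw [rpow_sum_of_pos hα, ← prod_mul_distrib]
          exact prod_congr rfl fun i _ => (mul_rpow hα.le (hr i).le).symm
      _ < ∏ i ∈ I, (1 : ℝ) :=
          prod_lt_prod_of_nonempty (fun i _ => rpow_pos_of_pos (hαr i) _)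
            (fun i hi => rpow_lt_one (hαr i).le (hgain i hi) (hw i)) hI
      _ = 1 := prod_const_one
  calc ∏ i, r i ^ w i = D * ∏ i ∈ I, r i ^ w i := (prod_sdiff (subset_univ I)).symm
    _ ≤ α ^ W * ∏ i ∈ I, r i ^ w i :=
        mul_le_mul_of_nonneg_right hDle (prod_nonneg fun i _ => (rpow_pos_of_pos (hr i) _).le)
    _ < 1 := hcoalition

namespace FLGame

variable {V A : Type*} [Fintype V] [Fintype A] (G : FLGame V A)

theorem w_le_Wmass (s : A → V) (i : A) : G.w i ≤ G.Wmass s (s i) := by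
  have := single_le_sum (f := fun j => if s j = s i then G.w j else 0)
    (fun j _ => by split_ifs; exacts [(G.w_pos j).le, le_rfl]) (mem_univ i)
  simpa [Wmass] using this

theorem cost_pos {s : A → V} {i : A} (hβ : 0 < G.β (s i)) : 0 < G.cost s i := by
  have hW : 0 < G.Wmass s (s i) := (G.w_pos i).trans_le (G.w_le_Wmass s i)
  have hshare : 0 < G.w i * G.β (s i) / G.Wmass s (s i) := by
    have := G.w_pos i
    positivity
  have hconn : 0 ≤ G.w i * G.d (G.u i) (s i) := mul_nonneg (G.w_pos i).le (G.d_nonneg _ _)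
  unfold cost
  linarith

noncomputable def potential (s : A → V) : ℝ := ∏ i, G.cost s i ^ G.w i

theorem potential_lt_of_coalDev (hβ : ∀ v, 0 < G.β v) {α : ℝ} {s s' : A → V} {I : Finset A}
    (hdev : G.CoalDev α s s' I)
    (hdam : (∏ i ∈ univ \ I, (G.cost s' i / G.cost s i) ^ G.w i) ^ (1 / ∑ i ∈ I, G.w i) ≤ α) :
    G.potential s' < G.potential s := by
  have hc : ∀ i, 0 < G.cost s i := fun i => G.cost_pos (hβ _)
  have hc' : ∀ i, 0 < G.cost s' i := fun i => G.cost_pos (hβ _)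
  have hratio := prod_rpow_lt_one_of_damage_le hdev.1 G.w_pos (fun i => div_pos (hc' i) (hc i))
    (fun i hi => by rw [← mul_div_assoc, div_lt_one (hc i)]; exact hdev.2.2 i hi) hdam
  have hsplit : G.potential s' = G.potential s * ∏ i, (G.cost s' i / G.cost s i) ^ G.w i := by
    rw [potential, potential, ← prod_mul_distrib]
    refine prod_congr rfl fun i _ => ?_
    rw [← mul_rpow (hc i).le (div_pos (hc' i) (hc i)).le, mul_div_cancel₀ _ (hc i).ne']
  rw [hsplit]
  exact mul_lt_of_lt_one_right (prod_pos fun i _ => rpow_pos_of_pos (hc i) _) hratio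

end FLGame

theorem stmt9_general {V A : Type*} [Fintype V] [Fintype A] (G : FLGame V A)
    (hβ : ∀ v, 0 < G.β v) (α : ℝ)
    (h : ∀ k : ℕ, 2 ≤ k → ∀ (seq : ℕ → A → V) (I : ℕ → Finset A),
      seq 1 = seq k →
      (∀ j, 1 ≤ j → j ≤ k - 1 → G.CoalDev α (seq j) (seq (j + 1)) (I j)) →
      ∀ j, 1 ≤ j → j ≤ k - 1 →
        (∏ i ∈ Finset.univ \ I j,
            (G.cost (seq (j + 1)) i / G.cost (seq j) i) ^ (G.w i)) ^
          (1 / ∑ i ∈ I j, G.w i) ≤ α) :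
    ∃ s : A → V, G.ApproxSE α s := by
  by_contra hno
  have hdev : ∀ s, ∃ I s', G.CoalDev α s s' I := fun s => not_not.1 fun hs => hno ⟨s, hs⟩
  choose I next hnext using hdev
  have := G.V_nonempty
  obtain ⟨x, n, hn, hx⟩ := exists_isPeriodicPt_of_finite next
  have hstep : ∀ m, G.CoalDev α (next^[m] x) (next^[m + 1] x) (I (next^[m] x)) := fun m => by
    rw [iterate_succ_apply']
    exact hnext _
  have hdam := h (n + 1) (by omega) (fun j => next^[j - 1] x) (fun j => I (next^[j - 1] x))
    (by simpa using hx.eq.symm)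
    (fun j hj _ => by obtain ⟨m, rfl⟩ := Nat.exists_eq_add_of_le' hj; simpa using hstep m)
  have hdecr : ∀ m < n, G.potential (next^[m + 1] x) < G.potential (next^[m] x) := fun m hm =>
    G.potential_lt_of_coalDev hβ (hstep m) (by simpa using hdam (m + 1) (by omega) (by omega))
  have hcycle := strictAntiOn_Iic_of_succ_lt (ψ := fun m => G.potential (next^[m] x))
    (fun m hm => by simpa only [Order.succ_eq_add_one] using hdecr m hm)
    (Set.mem_Iic.2 n.zero_le) (Set.mem_Iic.2 le_rfl) hn
  simp [hx.eq] at hcycle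

/-- If for every cycle of coalitional deviations the maximal weighted
damage `dam(I_j)^{1/W(I_j)}` is at most `α`, then the game has an `α`-approximate
strong equilibrium. -/
theorem stmt9 {V A : Type*} [Fintype V] [Fintype A] (G : FLGame V A)
    (hβ : ∀ v, 0 < G.β v) (α : ℝ) (hα : 1 ≤ α)
    (h : ∀ k : ℕ, 2 ≤ k → ∀ (seq : ℕ → A → V) (I : ℕ → Finset A),
      seq 1 = seq k →
      (∀ j, 1 ≤ j → j ≤ k - 1 → G.CoalDev α (seq j) (seq (j + 1)) (I j)) →
      ∀ j, 1 ≤ j → j ≤ k - 1 →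
        (∏ i ∈ Finset.univ \ I j,
            (G.cost (seq (j + 1)) i / G.cost (seq j) i) ^ (G.w i)) ^
          (1 / ∑ i ∈ I j, G.w i) ≤ α) :
    ∃ s : A → V, G.ApproxSE α s :=
  stmt9_general G hβ α h
end

section
/- Let s be any strategy profile of a Facility Location game with β_v > 0 for all nodes v, let I be a nonempty set of agents, and let s' be a profile with s'_j = s_j for all j ∉ I. Then Π_{j ∉ I} (c_j(s')/c_j(s))^{w_j} < e^{W(I)}, where W(I) = Σ_{i ∈ I} w_i and e is Euler's number. -/
open Finset
open scoped Classical

/-!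
Group the agents outside `I` by the facility they use under `s`. Let `W` be the outsider mass and
`x` the coalition mass at a facility `v`. The outsiders at `v` still share it under `s'`, while
under `s` the coalition mass helped pay for it, so each of their costs grows by a factor of at most
`(x + W) / W = 1 + x / W`. Hence their weighted product is at most `(1 + x / W) ^ W ≤ e ^ x`,
strictly when `x > 0`. Multiplying over facilities gives `e ^ W(I)`, strictly because some
coalition member sits somewhere.
-/

namespace Real

theorem one_add_div_rpow_lt_exp {x W : ℝ} (hx : 0 < x) (hW : 0 ≤ W) :
    (1 + x / W) ^ W < exp x := by
  rcases hW.eq_or_lt with rfl | hW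
  · rw [rpow_zero]
    exact one_lt_exp_iff.mpr hx
  have hbase : 1 + x / W < exp (x / W) := by
    linarith [add_one_lt_exp (div_pos hx hW).ne']
  calc (1 + x / W) ^ W < exp (x / W) ^ W :=
        rpow_lt_rpow (by positivity) hbase hW
    _ = exp x := by rw [← exp_mul, div_mul_cancel₀ _ hW.ne']

theorem one_add_div_rpow_le_exp {x W : ℝ} (hx : 0 ≤ x) (hW : 0 ≤ W) :
    (1 + x / W) ^ W ≤ exp x := by
  rcases hx.eq_or_lt with rfl | hx
  · rw [zero_div, add_zero, one_rpow, exp_zero]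
  · exact (one_add_div_rpow_lt_exp hx hW).le

theorem prod_rpow_le_rpow_sum {ι : Type*} (B : Finset ι) {r w : ι → ℝ} {c : ℝ}
    (hr : ∀ j ∈ B, 0 ≤ r j) (hrc : ∀ j ∈ B, r j ≤ c) (hw : ∀ j ∈ B, 0 ≤ w j) :
    ∏ j ∈ B, r j ^ w j ≤ c ^ ∑ j ∈ B, w j := by
  rcases B.eq_empty_or_nonempty with rfl | ⟨j₀, hj₀⟩
  · simp
  rw [rpow_sum_of_nonneg ((hr j₀ hj₀).trans (hrc j₀ hj₀)) hw]
  exact prod_le_prod (fun j hj => rpow_nonneg (hr j hj) _)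
    fun j hj => rpow_le_rpow (hr j hj) (hrc j hj) (hw j hj)

end Real

theorem add_div_le_one_add_div_mul {a b x W : ℝ} (ha : 0 ≤ a) (hx : 0 ≤ x) (hW : 0 < W) :
    a + b / W ≤ (1 + x / W) * (a + b / (x + W)) := by
  have hxW : 0 < x + W := by linarith
  rw [← sub_nonneg]
  have expand : (1 + x / W) * (a + b / (x + W)) - (a + b / W) = a * x / W := by
    field_simp
    ring
  rw [expand]
  positivity

namespace FLGame

variable {V A : Type*} [Fintype V] [Fintype A] (G : FLGame V A)

noncomputable def fiberMass (S : Finset A) (s : A → V) (v : V) : ℝ :=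
  ∑ j ∈ S with s j = v, G.w j

theorem fiberMass_nonneg (S : Finset A) (s : A → V) (v : V) : 0 ≤ G.fiberMass S s v :=
  sum_nonneg fun j _ => (G.w_pos j).le

theorem w_le_fiberMass {S : Finset A} {j : A} (hj : j ∈ S) (s : A → V) :
    G.w j ≤ G.fiberMass S s (s j) :=
  single_le_sum (f := G.w) (fun k _ => (G.w_pos k).le) (mem_filter.mpr ⟨hj, rfl⟩)

theorem fiberMass_congr {S : Finset A} {s s' : A → V} (h : ∀ j ∈ S, s' j = s j) (v : V) :
    G.fiberMass S s' v = G.fiberMass S s v := by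
  unfold fiberMass
  rw [filter_congr fun j hj => by rw [h j hj]]

theorem Wmass_eq_fiberMass_univ (s : A → V) (v : V) : G.Wmass s v = G.fiberMass univ s v := by
  rw [Wmass, fiberMass, sum_filter]

theorem Wmass_eq_fiberMass_add (I : Finset A) (s : A → V) (v : V) :
    G.Wmass s v = G.fiberMass I s v + G.fiberMass (univ \ I) s v := by
  rw [Wmass, fiberMass, fiberMass, sum_filter, sum_filter, add_comm,
    sum_sdiff (subset_univ I)]

theorem fiberMass_le_Wmass (S : Finset A) (s : A → V) (v : V) :
    G.fiberMass S s v ≤ G.Wmass s v := by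
  rw [Wmass_eq_fiberMass_univ]
  exact sum_le_sum_of_subset_of_nonneg (filter_subset_filter _ (subset_univ S))
    fun j _ _ => (G.w_pos j).le

theorem cost_nonneg (s : A → V) (i : A) : 0 ≤ G.cost s i := by
  have := G.w_pos i
  have := G.d_nonneg (G.u i) (s i)
  have := G.β_nonneg (s i)
  have := (G.fiberMass_nonneg univ s (s i)).trans_eq (G.Wmass_eq_fiberMass_univ s (s i)).symm
  unfold cost
  positivity

theorem cost_div_cost_le (hβ : ∀ v, 0 < G.β v) {s s' : A → V} {I : Finset A}
    (hs' : ∀ j ∉ I, s' j = s j) {j : A} (hj : j ∉ I) :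
    G.cost s' j / G.cost s j ≤
      1 + G.fiberMass I s (s j) / G.fiberMass (univ \ I) s (s j) := by
  set x := G.fiberMass I s (s j)
  set W := G.fiberMass (univ \ I) s (s j)
  have hsj : s' j = s j := hs' j hj
  have hW : 0 < W := (G.w_pos j).trans_le (G.w_le_fiberMass (mem_sdiff.mpr ⟨mem_univ j, hj⟩) s)
  have hx : 0 ≤ x := G.fiberMass_nonneg I s (s j)
  have hW' : W ≤ G.Wmass s' (s' j) := by
    have hW'eq : G.fiberMass (univ \ I) s' (s j) = W :=
      G.fiberMass_congr (fun k hk => hs' k (mem_sdiff.mp hk).2) (s j)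
    rw [hsj, ← hW'eq]
    exact G.fiberMass_le_Wmass _ s' (s j)
  have hcost : G.cost s j = G.w j * G.d (G.u j) (s j) + G.w j * G.β (s j) / (x + W) := by
    rw [cost, Wmass_eq_fiberMass_add G I]
  have ha : 0 ≤ G.w j * G.d (G.u j) (s j) := mul_nonneg (G.w_pos j).le (G.d_nonneg _ _)
  have hb : 0 < G.w j * G.β (s j) := mul_pos (G.w_pos j) (hβ _)
  have hcost_pos : 0 < G.cost s j := by rw [hcost]; positivity
  rw [div_le_iff₀ hcost_pos, hcost]
  calc G.cost s' j
      ≤ G.w j * G.d (G.u j) (s j) + G.w j * G.β (s j) / W := by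
        rw [cost, hsj]
        gcongr
        rwa [← hsj]
    _ ≤ _ := add_div_le_one_add_div_mul ha hx hW

end FLGame

/-- For any profile `s` of a game with positive facility costs, any
nonempty coalition `I` and any profile `s'` agreeing with `s` outside `I`, the weighted
damage satisfies `Π_{j ∉ I} (c_j(s')/c_j(s))^{w_j} < e^{W(I)}`. -/
theorem stmt10 {V A : Type*} [Fintype V] [Fintype A] (G : FLGame V A)
    (hβ : ∀ v, 0 < G.β v) (s s' : A → V) (I : Finset A) (hI : I.Nonempty)
    (hs' : ∀ j ∉ I, s' j = s j) :
    ∏ j ∈ Finset.univ \ I, (G.cost s' j / G.cost s j) ^ (G.w j) <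
      Real.exp (∑ i ∈ I, G.w i) := by
  set x := G.fiberMass I s
  set W := G.fiberMass (univ \ I) s
  obtain ⟨i, hi⟩ := hI
  have hx : ∀ v, 0 ≤ x v := G.fiberMass_nonneg I s
  have hW : ∀ v, 0 ≤ W v := G.fiberMass_nonneg _ s
  have hratio : ∀ j, 0 ≤ G.cost s' j / G.cost s j := fun j =>
    div_nonneg (G.cost_nonneg s' j) (G.cost_nonneg s j)
  have hfiber : ∀ v, ∏ j ∈ univ \ I with s j = v, (G.cost s' j / G.cost s j) ^ G.w j ≤
      (1 + x v / W v) ^ W v := fun v =>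
    Real.prod_rpow_le_rpow_sum _ (fun j _ => hratio j)
      (fun j hj => by
        obtain ⟨hjI, rfl⟩ := mem_filter.mp hj
        exact G.cost_div_cost_le hβ hs' (mem_sdiff.mp hjI).2)
      fun j _ => (G.w_pos j).le
  calc ∏ j ∈ univ \ I, (G.cost s' j / G.cost s j) ^ G.w j
      = ∏ v, ∏ j ∈ univ \ I with s j = v, (G.cost s' j / G.cost s j) ^ G.w j :=
        (prod_fiberwise _ _ _).symm
    _ ≤ ∏ v, (1 + x v / W v) ^ W v :=
        prod_le_prod (fun v _ => prod_nonneg fun j _ => Real.rpow_nonneg (hratio j) _)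
          fun v _ => hfiber v
    _ < ∏ v, Real.exp (x v) :=
        prod_lt_prod (fun v _ => Real.rpow_pos_of_pos (by have := hx v; have := hW v; positivity) _)
          (fun v _ => Real.one_add_div_rpow_le_exp (hx v) (hW v))
          ⟨s i, mem_univ _,
            Real.one_add_div_rpow_lt_exp ((G.w_pos i).trans_le (G.w_le_fiberMass hi s)) (hW _)⟩
    _ = Real.exp (∑ i ∈ I, G.w i) := by
        rw [← Real.exp_sum]
        exact congrArg Real.exp (sum_fiberwise I s G.w)
end

section
/- Let s be an α-approximate strong equilibrium (α ≥ 1) of an unweighted Facility Location game with n agents. Then for every strategy profile s*, the social costs satisfy c(s) ≤ α·H(n)·c(s*). In particular, the strong Price of Anarchy of α-approximate strong equilibria in unweighted Facility Location games is at most α·H(n). -/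
open Finset
open scoped Classical

noncomputable def Hh (m : ℕ) : ℝ := ∑ k ∈ Finset.range m, (1:ℝ)/(k+1)

lemma Hh_zero : Hh 0 = 0 := by simp [Hh]

lemma Hh_succ (m : ℕ) : Hh (m+1) = Hh m + 1/((m:ℝ)+1) := by
  simp [Hh, Finset.sum_range_succ]

lemma Hh_mono : Monotone Hh := by
  intro a b hab
  apply Finset.sum_le_sum_of_subset_of_nonneg (Finset.range_subset_range.2 hab)
  intros; positivity

lemma one_le_Hh {m : ℕ} (hm : 1 ≤ m) : 1 ≤ Hh m := by
  have h := Hh_mono hm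
  have h1 : Hh 1 = 1 := by simp [Hh]
  linarith

lemma wmass_card {V A : Type*} [Fintype V] [Fintype A] (G : FLGame V A)
    (hU : G.Unweighted) (σ : A → V) (v : V) :
    G.Wmass σ v = ((Finset.univ.filter (fun j => σ j = v)).card : ℝ) := by
  unfold FLGame.Wmass
  rw [Finset.card_filter]
  push_cast
  exact Finset.sum_congr rfl (fun j _ => by by_cases h : σ j = v <;> simp [h, hU j])

lemma key_lemma {V A : Type*} [Fintype V] [Fintype A] (G : FLGame V A)
    (hU : G.Unweighted) (α : ℝ) (hα : 1 ≤ α) (s : A → V)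
    (hSE : G.ApproxSE α s) (sstar : A → V) (I : Finset A) :
    ∑ i ∈ I, G.cost s i ≤
      α * ((∑ i ∈ I, G.d (G.u i) (sstar i)) +
        ∑ v, G.β v * Hh ((I.filter (fun j => sstar j = v)).card)) := by
  induction I using Finset.strongInduction with
  | _ I IH =>
  rcases I.eq_empty_or_nonempty with rfl | hne
  · simp [Hh_zero]
  · set σ : A → V := fun j => if j ∈ I then sstar j else s j with hσ
    have hagree : ∀ j ∉ I, σ j = s j := fun j hj => if_neg hj
    have hex : ∃ i ∈ I, G.cost s i ≤ α * G.cost σ i := by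
      by_contra hc
      push_neg at hc
      exact hSE ⟨I, σ, hne, hagree, fun i hi => hc i hi⟩
    obtain ⟨i, hiI, hkey⟩ := hex
    set v0 := sstar i with hv0
    set n := (I.filter (fun j => sstar j = v0)).card with hn
    have hin : i ∈ I.filter (fun j => sstar j = v0) := Finset.mem_filter.2 ⟨hiI, rfl⟩
    have hn1 : 1 ≤ n := Finset.card_pos.2 ⟨i, hin⟩
    have hnpos : (0:ℝ) < n := by exact_mod_cast hn1
    have hσi : σ i = v0 := if_pos hiI
    have hW : (n:ℝ) ≤ G.Wmass σ v0 := by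
      rw [wmass_card G hU]
      have : I.filter (fun j => sstar j = v0) ⊆
          Finset.univ.filter (fun j => σ j = v0) := by
        intro j hj
        rw [Finset.mem_filter] at hj ⊢
        exact ⟨Finset.mem_univ j, by simp [hσ, hj.1, hj.2]⟩
      exact_mod_cast Finset.card_le_card this
    have hcostσ : G.cost σ i ≤ G.d (G.u i) v0 + G.β v0 / n := by
      unfold FLGame.cost
      rw [hσi, hU i, one_mul, one_mul]
      have : G.β v0 / G.Wmass σ v0 ≤ G.β v0 / n :=
        div_le_div_of_nonneg_left (G.β_nonneg v0) hnpos hW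
      linarith
    have hci : G.cost s i ≤ α * (G.d (G.u i) v0 + G.β v0 / n) := by
      refine hkey.trans ?_
      have hα0 : (0:ℝ) ≤ α := by linarith
      exact mul_le_mul_of_nonneg_left hcostσ hα0
    have hIH := IH (I.erase i) (Finset.erase_ssubset hiI)
    -- counting lemma
    have hcard : ∀ v, ((I.erase i).filter (fun j => sstar j = v)).card =
        if v = v0 then n - 1 else (I.filter (fun j => sstar j = v)).card := by
      intro v
      rw [Finset.filter_erase]
      split_ifs with h
      · subst h; rw [Finset.card_erase_of_mem hin]
      · rw [Finset.erase_eq_of_notMem (fun hmem => h (Finset.mem_filter.1 hmem).2.symm)]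
    -- sum identity
    have hsum : ∑ v, G.β v * Hh (((I.erase i).filter (fun j => sstar j = v)).card)
          + G.β v0 / n
        = ∑ v, G.β v * Hh ((I.filter (fun j => sstar j = v)).card) := by
      have hdiff : ∑ v, (G.β v * Hh ((I.filter (fun j => sstar j = v)).card)
          - G.β v * Hh (((I.erase i).filter (fun j => sstar j = v)).card))
          = G.β v0 / n := by
        rw [Finset.sum_eq_single v0]
        · rw [hcard v0, if_pos rfl, ← hn]
          obtain ⟨m, hm⟩ : ∃ m, n = m + 1 := ⟨n - 1, (Nat.succ_pred_eq_of_pos hn1).symm⟩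
          rw [hm, Nat.add_sub_cancel, Hh_succ]
          push_cast
          ring
        · intro v _ hv
          rw [hcard v, if_neg hv]; ring
        · intro h; exact absurd (Finset.mem_univ v0) h
      rw [Finset.sum_sub_distrib] at hdiff
      linarith
    have hsplit1 : ∑ j ∈ I, G.cost s j
        = G.cost s i + ∑ j ∈ I.erase i, G.cost s j :=
      (Finset.add_sum_erase I _ hiI).symm
    have hsplit2 : ∑ j ∈ I, G.d (G.u j) (sstar j)
        = G.d (G.u i) v0 + ∑ j ∈ I.erase i, G.d (G.u j) (sstar j) :=
      (Finset.add_sum_erase I _ hiI).symm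
    calc ∑ j ∈ I, G.cost s j
        = G.cost s i + ∑ j ∈ I.erase i, G.cost s j := hsplit1
      _ ≤ α * (G.d (G.u i) v0 + G.β v0 / n)
          + α * ((∑ j ∈ I.erase i, G.d (G.u j) (sstar j)) +
            ∑ v, G.β v * Hh (((I.erase i).filter (fun j => sstar j = v)).card)) := by
          exact add_le_add hci hIH
      _ = α * ((∑ j ∈ I, G.d (G.u j) (sstar j)) +
            ((∑ v, G.β v * Hh (((I.erase i).filter (fun j => sstar j = v)).card))
              + G.β v0 / n)) := by rw [hsplit2]; ring
      _ = _ := by rw [hsum]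

/-- In an unweighted game with `n` agents, any `α`-approximate strong
equilibrium `s` satisfies `c(s) ≤ α · H(n) · c(s*)` for every profile `s*`. -/
theorem stmt13 {V A : Type*} [Fintype V] [Fintype A] (G : FLGame V A)
    (hU : G.Unweighted) (α : ℝ) (hα : 1 ≤ α) (s : A → V)
    (hSE : G.ApproxSE α s) (sstar : A → V) :
    G.social s ≤
      α * (∑ k ∈ Finset.range (Fintype.card A), (1 : ℝ) / (k + 1)) *
        G.social sstar := by
  classical
  set nA := Fintype.card A with hnA
  have hnA1 : 1 ≤ nA := Fintype.card_pos_iff.2 G.A_nonempty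
  have hα0 : (0:ℝ) ≤ α := by linarith
  set f : V → ℕ := fun v => (Finset.univ.filter (fun j => sstar j = v)).card with hf
  have hkey := key_lemma G hU α hα s hSE sstar Finset.univ
  -- social sstar decomposition
  have hWstar : ∀ v, G.Wmass sstar v = (f v : ℝ) := fun v => wmass_card G hU sstar v
  have hsoc : G.social sstar
      = (∑ i, G.d (G.u i) (sstar i)) + ∑ v, (f v : ℝ) * (G.β v / f v) := by
    unfold FLGame.social FLGame.cost
    rw [Finset.sum_add_distrib]
    congr 1
    · exact Finset.sum_congr rfl (fun i _ => by rw [hU i, one_mul])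
    · have hterm : ∀ i, G.w i * G.β (sstar i) / G.Wmass sstar (sstar i)
          = G.β (sstar i) / ((f (sstar i) : ℝ)) := fun i => by
        rw [hU i, one_mul, hWstar]
      rw [Finset.sum_congr rfl (fun i _ => hterm i),
        ← Finset.sum_fiberwise' Finset.univ sstar (fun v => G.β v / (f v : ℝ))]
      refine Finset.sum_congr rfl (fun v _ => ?_)
      rw [Finset.sum_const, nsmul_eq_mul]
  have hd_nonneg : 0 ≤ ∑ i, G.d (G.u i) (sstar i) :=
    Finset.sum_nonneg (fun i _ => G.d_nonneg _ _)
  have hH1 : 1 ≤ Hh nA := one_le_Hh hnA1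
  have hfac : ∀ v, G.β v * Hh (f v) ≤ Hh nA * ((f v : ℝ) * (G.β v / f v)) := by
    intro v
    rcases Nat.eq_zero_or_pos (f v) with h0 | hpos
    · simp [h0, Hh_zero]
    · have hfv : (0:ℝ) < f v := by exact_mod_cast hpos
      have : (f v : ℝ) * (G.β v / f v) = G.β v := by field_simp
      rw [this]
      have hle : f v ≤ nA := by
        rw [hnA, ← Finset.card_univ]
        exact Finset.card_le_card (Finset.filter_subset _ _)
      calc G.β v * Hh (f v) ≤ G.β v * Hh nA :=
            mul_le_mul_of_nonneg_left (Hh_mono hle) (G.β_nonneg v)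
        _ = Hh nA * G.β v := mul_comm _ _
  have hF : (∑ i, G.d (G.u i) (sstar i)) + ∑ v, G.β v * Hh (f v)
      ≤ Hh nA * G.social sstar := by
    rw [hsoc, mul_add]
    apply add_le_add
    · nlinarith
    · rw [Finset.mul_sum]
      exact Finset.sum_le_sum (fun v _ => hfac v)
  have hHs : Hh nA = ∑ k ∈ Finset.range (Fintype.card A), (1 : ℝ) / (k + 1) := rfl
  have : G.social s ≤ α * (Hh nA * G.social sstar) := by
    refine le_trans ?_ (mul_le_mul_of_nonneg_left hF hα0)
    exact hkey
  rw [← hHs, mul_assoc]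
  exact this
end

section
/- Consider a Facility Location game in which every agent's weight satisfies w_i ≥ 1, and let W = Σ_{i ∈ A} w_i. Let s be an α-approximate strong equilibrium (α ≥ 1). Then for every strategy profile s*, the social costs satisfy c(s) ≤ α·(1 + ln W)·c(s*). In particular, the strong Price of Anarchy of α-approximate strong equilibria in weighted Facility Location games is O(α·ln W). -/
open Finset
open scoped Classical

/-!
Greedy charging against `s*`. In any coalition `I` some member `i` cannot improve by a factor
more than `α` when all of `I` jointly switches to `s*`; there `i` shares the facility `s*ᵢ` with
at least the weight `Sᵢ` of `I` sitting there under `s*`, so `cᵢ(s) ≤ α (wᵢ d(uᵢ, s*ᵢ) + wᵢ β/Sᵢ)`.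
Remove `i` and repeat. The shares `wᵢ/Sᵢ` charged to one facility of total weight `S` telescope
against `x ↦ 1 + ln x`, since `w/S ≤ ln S - ln (S - w)`; the last agent at a facility is charged
`β` itself, which `1 + ln S ≥ 1` covers because weights are at least `1`. Hence each facility opened
in `s*` pays at most `β (1 + ln W)` in total.
-/

/-- Continuous stand-in for the harmonic number `H_x`, set to `0` on an empty facility. -/
noncomputable def logHarmonic (x : ℝ) : ℝ := if x = 0 then 0 else 1 + Real.log x

lemma div_le_logHarmonic_sub {w S : ℝ} (hw : 1 ≤ w) (hwS : w ≤ S) :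
    w / S ≤ logHarmonic S - logHarmonic (S - w) := by
  have hS : 0 < S := by linarith
  rw [logHarmonic, if_neg hS.ne']
  by_cases hSw : S - w = 0
  · rw [logHarmonic, if_pos hSw, show w = S by linarith, div_self hS.ne']
    linarith [Real.log_nonneg (show 1 ≤ S by linarith)]
  · have hpos : 0 < S - w := lt_of_le_of_ne (by linarith) (Ne.symm hSw)
    have hlog := Real.one_sub_inv_le_log_of_pos (div_pos hS hpos)
    rw [Real.log_div hS.ne' hpos.ne', inv_div, one_sub_div hS.ne', sub_sub_cancel] at hlog
    rw [logHarmonic, if_neg hSw]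
    linarith

lemma logHarmonic_le {x W : ℝ} (hx : 0 ≤ x) (hxW : x ≤ W) :
    logHarmonic x ≤ if x = 0 then 0 else 1 + Real.log W := by
  unfold logHarmonic
  split_ifs with h
  · exact le_rfl
  · linarith [Real.log_le_log (lt_of_le_of_ne hx (Ne.symm h)) hxW]

namespace FLGame

variable {V A : Type*} [Fintype V] [Fintype A] (G : FLGame V A)

noncomputable def massOn (t : A → V) (I : Finset A) (v : V) : ℝ :=
  ∑ j ∈ I, if t j = v then G.w j else 0

noncomputable def facilityCharge (t : A → V) (I : Finset A) : ℝ :=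
  ∑ v, G.β v * logHarmonic (G.massOn t I v)

variable {G}

lemma ite_w_nonneg (p : Prop) [Decidable p] (j : A) : 0 ≤ if p then G.w j else 0 := by
  split_ifs
  exacts [(G.w_pos j).le, le_rfl]

lemma massOn_nonneg (t : A → V) (I : Finset A) (v : V) : 0 ≤ G.massOn t I v :=
  sum_nonneg fun j _ => ite_w_nonneg _ j

lemma w_le_massOn (t : A → V) {I : Finset A} {i : A} (hi : i ∈ I) :
    G.w i ≤ G.massOn t I (t i) :=
  calc G.w i = if t i = t i then G.w i else 0 := (if_pos rfl).symm
    _ ≤ G.massOn t I (t i) :=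
      single_le_sum (f := fun j => if t j = t i then G.w j else 0)
        (fun j _ => ite_w_nonneg _ j) hi

lemma massOn_mono (t : A → V) {I J : Finset A} (hIJ : I ⊆ J) (v : V) :
    G.massOn t I v ≤ G.massOn t J v :=
  sum_le_sum_of_subset_of_nonneg hIJ fun j _ _ => ite_w_nonneg _ j

lemma massOn_congr {t t' : A → V} {I : Finset A} (h : ∀ j ∈ I, t j = t' j) (v : V) :
    G.massOn t I v = G.massOn t' I v :=
  sum_congr rfl fun j hj => by rw [h j hj]

lemma massOn_erase (t : A → V) {I : Finset A} {i : A} (hi : i ∈ I) (v : V) :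
    G.massOn t (I.erase i) v = G.massOn t I v - if t i = v then G.w i else 0 :=
  sum_erase_eq_sub hi

lemma Wmass_le_sum_w (t : A → V) (v : V) : G.Wmass t v ≤ ∑ i, G.w i :=
  sum_le_sum fun j _ => by split_ifs <;> [exact le_rfl; exact (G.w_pos j).le]

lemma cost_le_of_le_Wmass {s : A → V} {i : A} {M : ℝ} (hM : 0 < M)
    (hMs : M ≤ G.Wmass s (s i)) :
    G.cost s i ≤ G.w i * G.d (G.u i) (s i) + G.w i * G.β (s i) / M := by
  unfold cost
  gcongr
  exact mul_nonneg (G.w_pos i).le (G.β_nonneg _)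

/-- Each agent pays its weight's share of its facility, so the facility part of the social cost
is the total opening cost of the facilities in use. -/
lemma sum_share_eq (t : A → V) :
    ∑ i, G.w i * G.β (t i) / G.Wmass t (t i) = ∑ v, if G.Wmass t v = 0 then 0 else G.β v := by
  rw [← sum_fiberwise univ t]
  refine sum_congr rfl fun v _ => ?_
  have hmass : ∑ i with t i = v, G.w i = G.Wmass t v := by rw [Wmass, sum_filter]
  calc ∑ i with t i = v, G.w i * G.β (t i) / G.Wmass t (t i)
      = ∑ i with t i = v, G.w i * (G.β v / G.Wmass t v) :=
        sum_congr rfl fun i hi => by rw [(mem_filter.mp hi).2, mul_div_assoc]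
    _ = G.Wmass t v * (G.β v / G.Wmass t v) := by rw [← sum_mul, hmass]
    _ = if G.Wmass t v = 0 then 0 else G.β v := by
        split_ifs with h
        · rw [h, zero_mul]
        · exact mul_div_cancel₀ _ h

lemma social_eq (t : A → V) :
    G.social t = ∑ i, G.w i * G.d (G.u i) (t i) + ∑ v, if G.Wmass t v = 0 then 0 else G.β v := by
  rw [← sum_share_eq, ← sum_add_distrib]
  rfl

lemma facilityCharge_empty (t : A → V) : G.facilityCharge t ∅ = 0 := by
  simp [facilityCharge, massOn, logHarmonic]

lemma facilityCharge_univ_le (t : A → V) :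
    G.facilityCharge t univ
      ≤ (1 + Real.log (∑ i, G.w i)) * ∑ v, if G.Wmass t v = 0 then 0 else G.β v := by
  rw [mul_sum]
  refine sum_le_sum fun v _ => ?_
  have h := logHarmonic_le (massOn_nonneg (G := G) t univ v) (Wmass_le_sum_w t v)
  change G.β v * logHarmonic (G.Wmass t v) ≤ _
  calc G.β v * logHarmonic (G.Wmass t v)
      ≤ G.β v * (if G.Wmass t v = 0 then 0 else 1 + Real.log (∑ i, G.w i)) :=
        mul_le_mul_of_nonneg_left h (G.β_nonneg v)
    _ = _ := by split_ifs <;> ring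

lemma share_add_facilityCharge_erase_le (hw : ∀ i, 1 ≤ G.w i) (t : A → V) {I : Finset A}
    {i : A} (hi : i ∈ I) :
    G.w i * G.β (t i) / G.massOn t I (t i) + G.facilityCharge t (I.erase i)
      ≤ G.facilityCharge t I := by
  have hshare : G.w i * G.β (t i) / G.massOn t I (t i)
      = ∑ v, if t i = v then G.w i * G.β v / G.massOn t I v else 0 := by simp
  rw [facilityCharge, facilityCharge, hshare, ← sum_add_distrib]
  refine sum_le_sum fun v _ => ?_
  rw [massOn_erase t hi]
  split_ifs with hv
  · subst hv
    have h := mul_le_mul_of_nonneg_left (div_le_logHarmonic_sub (hw i) (w_le_massOn t hi))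
      (G.β_nonneg (t i))
    rw [mul_comm (G.w i), mul_div_assoc]
    linarith
  · rw [zero_add, sub_zero]

lemma ApproxSE.exists_cost_le {α : ℝ} (hα : 0 ≤ α) {s : A → V} (hSE : G.ApproxSE α s)
    (t : A → V) {I : Finset A} (hI : I.Nonempty) :
    ∃ i ∈ I, G.cost s i
      ≤ α * (G.w i * G.d (G.u i) (t i) + G.w i * G.β (t i) / G.massOn t I (t i)) := by
  have hdev : ¬ G.CoalDev α s (I.piecewise t s) I := fun h => hSE ⟨I, _, h⟩
  simp only [CoalDev, not_and, not_forall, not_lt] at hdev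
  obtain ⟨i, hi, hcost⟩ := hdev hI fun j hj => I.piecewise_eq_of_notMem t s hj
  refine ⟨i, hi, hcost.trans (mul_le_mul_of_nonneg_left ?_ hα)⟩
  have hti : I.piecewise t s i = t i := I.piecewise_eq_of_mem t s hi
  have hmass : G.massOn t I (t i) ≤ G.Wmass (I.piecewise t s) (I.piecewise t s i) := by
    rw [hti, massOn_congr (fun j hj => (I.piecewise_eq_of_mem t s hj).symm)]
    exact massOn_mono _ (subset_univ I) _
  have h := cost_le_of_le_Wmass ((G.w_pos i).trans_le (w_le_massOn t hi)) hmass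
  rwa [hti] at h

lemma ApproxSE.sum_cost_le (hw : ∀ i, 1 ≤ G.w i) {α : ℝ} (hα : 0 ≤ α) {s : A → V}
    (hSE : G.ApproxSE α s) (t : A → V) (I : Finset A) :
    ∑ i ∈ I, G.cost s i ≤ α * (∑ i ∈ I, G.w i * G.d (G.u i) (t i) + G.facilityCharge t I) := by
  induction I using Finset.strongInduction with
  | H I ih =>
  rcases I.eq_empty_or_nonempty with rfl | hI
  · simp [facilityCharge_empty]
  obtain ⟨i, hi, hcost⟩ := hSE.exists_cost_le hα t hI
  have hrest := ih _ (erase_ssubset hi)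
  have hcharge := mul_le_mul_of_nonneg_left (share_add_facilityCharge_erase_le hw t hi) hα
  rw [← add_sum_erase I _ hi, ← add_sum_erase I _ hi]
  linarith

end FLGame

/-- In a weighted game with all weights at least `1` and total weight
`W`, any `α`-approximate strong equilibrium `s` satisfies
`c(s) ≤ α · (1 + ln W) · c(s*)` for every profile `s*`. -/
theorem stmt14 {V A : Type*} [Fintype V] [Fintype A] (G : FLGame V A)
    (hw : ∀ i, 1 ≤ G.w i) (α : ℝ) (hα : 1 ≤ α) (s : A → V)
    (hSE : G.ApproxSE α s) (sstar : A → V) :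
    G.social s ≤ α * (1 + Real.log (∑ i, G.w i)) * G.social sstar := by
  have hα0 : 0 ≤ α := zero_le_one.trans hα
  obtain ⟨i₀⟩ := G.A_nonempty
  have hlogW : 0 ≤ Real.log (∑ i, G.w i) :=
    Real.log_nonneg ((hw i₀).trans (single_le_sum (fun j _ => (G.w_pos j).le) (mem_univ i₀)))
  have hD : 0 ≤ ∑ i, G.w i * G.d (G.u i) (sstar i) :=
    sum_nonneg fun i _ => mul_nonneg (G.w_pos i).le (G.d_nonneg _ _)
  have hcharge := mul_le_mul_of_nonneg_left (G.facilityCharge_univ_le sstar) hα0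
  have hcost := hSE.sum_cost_le hw hα0 sstar univ
  rw [FLGame.social, FLGame.social_eq]
  linarith [mul_nonneg hα0 (mul_nonneg hlogW hD)]
end

section
/- Let s and s* be strategy profiles of an unweighted Facility Location game and let α ≥ 1. Fix a node v with A_{s*}(v) = {i : s*_i = v} nonempty, let A_s(v) = {i ∈ A_{s*}(v) : s_i = v}, and let I = A_{s*}(v) \ A_s(v) be the misconnected agents. If every i ∈ I satisfies c_i(s) ≤ α·(d(u_i, v) + β_v/|A_{s*}(v)|), then Σ_{i ∈ A_{s*}(v)} c_i(s) ≤ (1 + α)·c_v(s*), where c_v(s*) = Σ_{i ∈ A_{s*}(v)} c_i(s*). -/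
open Finset
open scoped Classical

/-- In an unweighted game, fix `v` with `A_{s*}(v)` nonempty and let `I`
be its misconnected agents under `s`. If every `i ∈ I` has
`c_i(s) ≤ α·(d(u_i,v) + β_v/|A_{s*}(v)|)`, then
`Σ_{i ∈ A_{s*}(v)} c_i(s) ≤ (1+α)·c_v(s*)`. -/
theorem stmt16 {V A : Type*} [Fintype V] [Fintype A] (G : FLGame V A)
    (hU : G.Unweighted) (α : ℝ) (hα : 1 ≤ α) (s sstar : A → V) (v : V)
    (hne : (Finset.univ.filter (fun i => sstar i = v)).Nonempty)
    (hmis : ∀ i ∈ Finset.univ.filter (fun i => sstar i = v ∧ s i ≠ v),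
      G.cost s i ≤ α * (G.d (G.u i) v +
        G.β v / ((Finset.univ.filter (fun i => sstar i = v)).card : ℝ))) :
    ∑ i ∈ Finset.univ.filter (fun i => sstar i = v), G.cost s i ≤
      (1 + α) * ∑ i ∈ Finset.univ.filter (fun i => sstar i = v), G.cost sstar i := by
  classical
  set N := Finset.univ.filter (fun i => sstar i = v) with hN
  have hWstar : G.Wmass sstar v = (N.card : ℝ) := by
    simp only [FLGame.Wmass, show ∀ i, G.w i = 1 from hU]
    rw [Finset.sum_boole]
  have hNcard : (0:ℝ) < N.card := by exact_mod_cast Finset.card_pos.2 hne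
  have hcoststar : ∀ i ∈ N, G.cost sstar i = G.d (G.u i) v + G.β v / N.card := by
    intro i hi
    have hv : sstar i = v := (Finset.mem_filter.1 hi).2
    simp [FLGame.cost, hU i, hv, hWstar]
  have hcoststar_nonneg : ∀ i ∈ N, 0 ≤ G.cost sstar i := by
    intro i hi
    rw [hcoststar i hi]
    exact add_nonneg (G.d_nonneg _ _) (div_nonneg (G.β_nonneg _) hNcard.le)
  have hsumstar : ∑ i ∈ N, G.cost sstar i = (∑ i ∈ N, G.d (G.u i) v) + G.β v := by
    rw [Finset.sum_congr rfl hcoststar, Finset.sum_add_distrib, Finset.sum_const,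
      nsmul_eq_mul]
    have : (N.card:ℝ) * (G.β v / N.card) = G.β v := by
      field_simp
    rw [this]
  set C := N.filter (fun i => s i = v) with hC
  set I := N.filter (fun i => ¬ s i = v) with hI
  have hsplit : ∑ i ∈ N, G.cost s i = ∑ i ∈ C, G.cost s i + ∑ i ∈ I, G.cost s i :=
    (Finset.sum_filter_add_sum_filter_not N _ _).symm
  -- bound on misconnected agents
  have hIbound : ∑ i ∈ I, G.cost s i ≤ α * ∑ i ∈ I, G.cost sstar i := by
    rw [Finset.mul_sum]
    apply Finset.sum_le_sum
    intro i hi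
    have hiN : i ∈ N := (Finset.mem_filter.1 hi).1
    rw [hcoststar i hiN]
    apply hmis
    simp only [Finset.mem_filter, Finset.mem_univ, true_and]
    exact ⟨(Finset.mem_filter.1 hiN).2, (Finset.mem_filter.1 hi).2⟩
  -- bound on connected agents
  have hW : G.Wmass s v = ((Finset.univ.filter (fun j => s j = v)).card : ℝ) := by
    simp only [FLGame.Wmass, show ∀ i, G.w i = 1 from hU]
    rw [Finset.sum_boole]
  have hCsub : C ⊆ Finset.univ.filter (fun j => s j = v) := by
    intro i hi
    simp only [Finset.mem_filter, Finset.mem_univ, true_and]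
    exact (Finset.mem_filter.1 hi).2
  have hCbound : ∑ i ∈ C, G.cost s i ≤ (∑ i ∈ C, G.d (G.u i) v) + G.β v := by
    rcases C.eq_empty_or_nonempty with h | h
    · simp [h, G.β_nonneg v]
    · have hWpos : 0 < G.Wmass s v := by
        rw [hW]
        have : 0 < (Finset.univ.filter (fun j => s j = v)).card :=
          Finset.card_pos.2 (h.mono hCsub)
        exact_mod_cast this
      have hcost : ∀ i ∈ C, G.cost s i = G.d (G.u i) v + G.β v / G.Wmass s v := by
        intro i hi
        have hv : s i = v := (Finset.mem_filter.1 hi).2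
        simp [FLGame.cost, hU i, hv]
      rw [Finset.sum_congr rfl hcost, Finset.sum_add_distrib, Finset.sum_const,
        nsmul_eq_mul]
      have hcard : (C.card : ℝ) ≤ G.Wmass s v := by
        rw [hW]; exact_mod_cast Finset.card_le_card hCsub
      have hkey : (C.card:ℝ) * (G.β v / G.Wmass s v) ≤ G.β v := by
        rw [mul_div_assoc', div_le_iff₀ hWpos]
        nlinarith [G.β_nonneg v]
      linarith
  have hdsub : ∑ i ∈ C, G.d (G.u i) v ≤ ∑ i ∈ N, G.d (G.u i) v :=
    Finset.sum_le_sum_of_subset_of_nonneg (Finset.filter_subset _ _)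
      (fun i _ _ => G.d_nonneg _ _)
  have hIsub : ∑ i ∈ I, G.cost sstar i ≤ ∑ i ∈ N, G.cost sstar i :=
    Finset.sum_le_sum_of_subset_of_nonneg (Finset.filter_subset _ _)
      (fun i hi _ => hcoststar_nonneg i hi)
  have hαI : α * ∑ i ∈ I, G.cost sstar i ≤ α * ∑ i ∈ N, G.cost sstar i :=
    mul_le_mul_of_nonneg_left hIsub (by linarith)
  calc ∑ i ∈ N, G.cost s i = ∑ i ∈ C, G.cost s i + ∑ i ∈ I, G.cost s i := hsplit
    _ ≤ ((∑ i ∈ C, G.d (G.u i) v) + G.β v) + α * ∑ i ∈ I, G.cost sstar i := by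
        linarith
    _ ≤ ((∑ i ∈ N, G.d (G.u i) v) + G.β v) + α * ∑ i ∈ N, G.cost sstar i := by
        linarith
    _ = (1 + α) * ∑ i ∈ N, G.cost sstar i := by rw [hsumstar]; ring
end

section
/- There exists a constant C such that for every unweighted metric Facility Location game, every e-approximate strong equilibrium s (where e is Euler's number), and every strategy profile s*, the social costs satisfy c(s) ≤ C·c(s*). In particular, the Price of Anarchy of e-approximate strong equilibria in the unweighted metric Facility Location game with fairly allocated facility costs is upper bounded by a constant. -/
open Finset
open scoped Classical

section Aux

variable {V A : Type*} [Fintype V] [Fintype A]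

private lemma extract_mem (G : FLGame V A) {α : ℝ} {s : A → V} (h : G.ApproxSE α s)
    (I : Finset A) (hI : I.Nonempty) (s' : A → V) (hs' : ∀ j ∉ I, s' j = s j) :
    ∃ i ∈ I, G.cost s i ≤ α * G.cost s' i := by
  by_contra hc
  push_neg at hc
  exact h ⟨I, s', hI, hs', fun i hi => hc i hi⟩

end Aux

/-- There is a constant `C` such that in every unweighted metric Facility
Location game, every `e`-approximate strong equilibrium `s` satisfies
`c(s) ≤ C · c(s*)` for every profile `s*`. -/
theorem stmt19 :
    ∃ C : ℝ, 0 < C ∧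
      ∀ (V A : Type) [Fintype V] [Fintype A] (G : FLGame V A),
        G.Unweighted → G.Metric →
          ∀ s : A → V, G.ApproxSE (Real.exp 1) s →
            ∀ sstar : A → V, G.social s ≤ C * G.social sstar := by
  have he1 : (1:ℝ) ≤ Real.exp 1 := Real.one_le_exp (by norm_num)
  have he0 : (0:ℝ) < Real.exp 1 := lt_of_lt_of_le one_pos he1
  set e := Real.exp 1 with he
  refine ⟨3*e + 4*e^2, by nlinarith, ?_⟩
  intro V A _ _ G hU hM s hSE sstar
  obtain ⟨hdself, hdsymm, hd0, htri⟩ := hM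
  have costeq : ∀ (t : A → V) (i : A),
      G.cost t i = G.d (G.u i) (t i) + G.β (t i) / G.Wmass t (t i) := by
    intro t i; simp [FLGame.cost, hU i]
  have Wone : ∀ (t : A → V) (i : A), (1:ℝ) ≤ G.Wmass t (t i) := by
    intro t i
    have h := Finset.single_le_sum (f := fun j => if t j = t i then G.w j else 0)
      (fun j _ => by by_cases hji : t j = t i <;> simp [hji, (G.w_pos j).le]) (Finset.mem_univ i)
    simp only [if_pos rfl, hU i] at h
    exact h
  -- per-facility group bound
  have group : ∀ f : V,
      (∑ j ∈ univ.filter (fun j => sstar j = f), G.cost s j)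
        ≤ (3*e + 4*e^2) * ∑ j ∈ univ.filter (fun j => sstar j = f), G.cost sstar j := by
    intro f
    set g := univ.filter (fun j => sstar j = f) with hg
    rcases g.eq_empty_or_nonempty with hge | hgne
    · simp [hge]
    set D := ∑ j ∈ g, G.d (G.u j) f with hD
    have hD0 : 0 ≤ D := Finset.sum_nonneg fun j _ => hd0 _ _
    have hb0 : 0 ≤ G.β f := G.β_nonneg f
    set N : ℝ := (g.card : ℝ) with hN
    have hN0 : 0 < N := by
      rw [hN]; exact_mod_cast Finset.card_pos.mpr hgne
    -- RHS value of the group under sstar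
    have hWstar : G.Wmass sstar f = N := by
      unfold FLGame.Wmass
      rw [Finset.sum_congr rfl (fun j _ => by simp [hU j] :
        ∀ j ∈ Finset.univ, (if sstar j = f then G.w j else 0) = (if sstar j = f then (1:ℝ) else 0))]
      rw [Finset.sum_boole]
    have hrhs : ∑ j ∈ g, G.cost sstar j = D + G.β f := by
      have hco : ∀ j ∈ g, G.cost sstar j = G.d (G.u j) f + G.β f / N := by
        intro j hj
        have hjf : sstar j = f := (Finset.mem_filter.mp hj).2
        rw [costeq, hjf, hWstar]
      rw [Finset.sum_congr rfl hco, Finset.sum_add_distrib, Finset.sum_const, nsmul_eq_mul]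
      rw [← hN, mul_div_cancel₀ _ (ne_of_gt hN0), hD]
    -- Step 1: the close-to-f half of the group deviates to f
    set I := g.filter (fun j => N * G.d (G.u j) f ≤ 2 * D) with hI
    have hIg : I ⊆ g := Finset.filter_subset _ _
    set M : ℝ := (I.card : ℝ) with hM
    have hNM : N ≤ 2 * M := by
      set J := g \ I with hJ
      have hcard : (J.card : ℝ) + M = N := by
        rw [hM, hN, ← Nat.cast_add, Finset.card_sdiff_add_card_eq_card hIg]
      rcases J.eq_empty_or_nonempty with hJe | hJne
      · rw [hJe] at hcard; simp at hcard; linarith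
      · have hstrict : ∀ j ∈ J, 2 * D / N < G.d (G.u j) f := by
          intro j hj
          have hjI : j ∉ I := (Finset.mem_sdiff.mp hj).2
          have hjg : j ∈ g := (Finset.mem_sdiff.mp hj).1
          have hnot : ¬ (N * G.d (G.u j) f ≤ 2 * D) := fun hcon =>
            hjI (Finset.mem_filter.mpr ⟨hjg, hcon⟩)
          push_neg at hnot
          rw [div_lt_iff₀ hN0]
          linarith
        have hsum1 : (J.card : ℝ) * (2 * D / N) < ∑ j ∈ J, G.d (G.u j) f := by
          have h := Finset.sum_lt_sum_of_nonempty hJne hstrict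
          rw [Finset.sum_const, nsmul_eq_mul] at h
          exact h
        have hsum2 : ∑ j ∈ J, G.d (G.u j) f ≤ D := by
          apply Finset.sum_le_sum_of_subset_of_nonneg Finset.sdiff_subset
          intro j _ _; exact hd0 _ _
        have hk0 : (0:ℝ) ≤ (J.card : ℝ) := Nat.cast_nonneg _
        have key : (J.card : ℝ) * (2 * D) < N * D := by
          have hlt := lt_of_lt_of_le hsum1 hsum2
          have := mul_lt_mul_of_pos_right hlt hN0
          calc (J.card:ℝ) * (2*D) = ((J.card:ℝ) * (2*D/N)) * N := by
                field_simp
          _ < D * N := this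
          _ = N * D := mul_comm _ _
        nlinarith [key, hD0, hcard, hk0]
    have hM0 : 0 < M := by linarith
    have hIne : I.Nonempty := by
      apply Finset.card_pos.mp
      have hc : (0:ℝ) < (I.card : ℝ) := by rw [← hM]; exact hM0
      exact_mod_cast hc
    set s1 : A → V := fun j => if j ∈ I then f else s j with hs1
    obtain ⟨i0, hi0I, hi0⟩ := extract_mem G hSE I hIne s1 (fun j hj => by simp [hs1, hj])
    have hi0g : i0 ∈ g := hIg hi0I
    have hdi0 : G.d (G.u i0) f ≤ 2 * D / N := by
      have h := (Finset.mem_filter.mp hi0I).2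
      rw [le_div_iff₀ hN0]
      linarith
    have hs1i0 : s1 i0 = f := by simp [hs1, hi0I]
    have hW1 : M ≤ G.Wmass s1 f := by
      unfold FLGame.Wmass
      calc M = ∑ _j ∈ I, (1:ℝ) := by rw [Finset.sum_const, nsmul_eq_mul, mul_one, hM]
      _ = ∑ j ∈ I, (if s1 j = f then G.w j else 0) := by
          apply Finset.sum_congr rfl; intro j hj; simp [hs1, hj, hU j]
      _ ≤ ∑ j, (if s1 j = f then G.w j else 0) := by
          apply Finset.sum_le_sum_of_subset_of_nonneg (Finset.subset_univ I)
          intro j _ _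
          split
          · exact le_of_lt (G.w_pos j)
          · exact le_refl 0
    have hcost1 : G.cost s1 i0 ≤ 2 * D / N + 2 * G.β f / N := by
      rw [costeq, hs1i0]
      have hWpos : 0 < G.Wmass s1 f := lt_of_lt_of_le hM0 hW1
      have h1 : G.β f / G.Wmass s1 f ≤ G.β f / M := by
        rw [div_le_div_iff₀ hWpos hM0]
        exact mul_le_mul_of_nonneg_left hW1 hb0
      have h2 : G.β f / M ≤ 2 * G.β f / N := by
        rw [div_le_div_iff₀ hM0 hN0]
        nlinarith
      linarith
    set B := e * (2*D + 2*G.β f) / N with hB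
    have hB0 : 0 ≤ B := by
      rw [hB]
      apply div_nonneg _ (le_of_lt hN0)
      nlinarith
    have hi0B : G.cost s i0 ≤ B := by
      have h2 : e * G.cost s1 i0 ≤ e * (2*D/N + 2*G.β f/N) :=
        mul_le_mul_of_nonneg_left hcost1 (le_of_lt he0)
      have h3 : e * (2*D/N + 2*G.β f/N) = B := by
        rw [hB]; field_simp
      linarith [hi0]
    -- Step 2: anchoring at v = s i0
    set v := s i0 with hv
    have hWv1 : (1:ℝ) ≤ G.Wmass s v := Wone s i0
    have hWv0 : (0:ℝ) < G.Wmass s v := lt_of_lt_of_le one_pos hWv1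
    have hsharev : G.β v / G.Wmass s v ≤ G.cost s i0 := by
      rw [costeq]
      have := hd0 (G.u i0) (s i0)
      simp only [← hv]
      linarith
    have hdv : G.d (G.u i0) v ≤ G.cost s i0 := by
      rw [costeq]
      have := div_nonneg (G.β_nonneg (s i0)) (le_of_lt (by rw [hv] at hWv0; exact hWv0 :
        (0:ℝ) < G.Wmass s (s i0)))
      simp only [← hv]
      linarith
    set K := 2*D/N + 2*B with hK
    have hDN0 : 0 ≤ 2*D/N := by positivity
    have hK2B : 2*B ≤ K := by rw [hK]; linarith
    have hK0 : 0 ≤ K := by linarith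
    have claim : ∀ j ∈ g, G.cost s j ≤ e * (G.d (G.u j) f + K) := by
      by_contra hcl
      push_neg at hcl
      obtain ⟨j0, hj0g, hj0⟩ := hcl
      set Bad := g.filter (fun j => e * (G.d (G.u j) f + K) < G.cost s j) with hBadDef
      have hBadne : Bad.Nonempty := ⟨j0, Finset.mem_filter.mpr ⟨hj0g, hj0⟩⟩
      set s2 : A → V := fun j => if j ∈ Bad then v else s j with hs2
      have hW2 : G.Wmass s v ≤ G.Wmass s2 v := by
        unfold FLGame.Wmass
        apply Finset.sum_le_sum
        intro j _
        by_cases hjB : j ∈ Bad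
        · have : s2 j = v := by simp [hs2, hjB]
          rw [if_pos this]
          split
          · exact le_refl _
          · exact le_of_lt (G.w_pos j)
        · have : s2 j = s j := by simp [hs2, hjB]
          rw [this]
      have hcost2 : ∀ j ∈ Bad, G.cost s2 j ≤ G.d (G.u j) f + K := by
        intro j hj
        have hs2j : s2 j = v := by simp [hs2, hj]
        rw [costeq, hs2j]
        have hdj : G.d (G.u j) v ≤ G.d (G.u j) f + G.d (G.u i0) f + G.d (G.u i0) v := by
          have t1 := htri (G.u j) f v
          have t2 := htri f (G.u i0) v
          have t3 := hdsymm f (G.u i0)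
          linarith
        have hsh : G.β v / G.Wmass s2 v ≤ G.β v / G.Wmass s v := by
          rw [div_le_div_iff₀ (lt_of_lt_of_le hWv0 hW2) hWv0]
          exact mul_le_mul_of_nonneg_left hW2 (G.β_nonneg v)
        rw [hK]
        linarith [hsharev, hdv, hdi0, hi0B, hsh, hdj]
      obtain ⟨j1, hj1B, hj1⟩ := extract_mem G hSE Bad hBadne s2 (fun j hj => by simp [hs2, hj])
      have hlt := (Finset.mem_filter.mp hj1B).2
      have h2 : e * G.cost s2 j1 ≤ e * (G.d (G.u j1) f + K) :=
        mul_le_mul_of_nonneg_left (hcost2 j1 hj1B) (le_of_lt he0)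
      linarith
    -- sum up the group
    have hsum : ∑ j ∈ g, G.cost s j ≤ e * D + N * (e * K) := by
      calc ∑ j ∈ g, G.cost s j ≤ ∑ j ∈ g, e * (G.d (G.u j) f + K) := Finset.sum_le_sum claim
      _ = ∑ j ∈ g, (e * G.d (G.u j) f + e * K) := by
          apply Finset.sum_congr rfl; intro j _; ring
      _ = e * D + N * (e * K) := by
          rw [Finset.sum_add_distrib, ← Finset.mul_sum, Finset.sum_const, nsmul_eq_mul, ← hD, ← hN]
    have hNK : N * K = 2*D + 2*(e*(2*D+2*G.β f)) := by
      rw [hK, hB]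
      field_simp
    calc ∑ j ∈ g, G.cost s j ≤ e*D + N*(e*K) := hsum
    _ = e*D + e*(N*K) := by ring
    _ = e*D + e*(2*D + 2*(e*(2*D+2*G.β f))) := by rw [hNK]
    _ ≤ (3*e+4*e^2) * (D + G.β f) := by
        have hring : (3*e+4*e^2)*(D+G.β f) - (e*D + e*(2*D + 2*(e*(2*D+2*G.β f)))) = 3*(e*G.β f) := by
          ring
        linarith [mul_nonneg (le_of_lt he0) hb0]
    _ = (3*e+4*e^2) * ∑ j ∈ g, G.cost sstar j := by rw [hrhs]
  -- assemble over all facilities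
  have hfib1 : G.social s = ∑ f : V, ∑ j ∈ univ.filter (fun j => sstar j = f), G.cost s j := by
    rw [FLGame.social, ← Finset.sum_fiberwise Finset.univ sstar (G.cost s)]
  have hfib2 : G.social sstar
      = ∑ f : V, ∑ j ∈ univ.filter (fun j => sstar j = f), G.cost sstar j := by
    rw [FLGame.social, ← Finset.sum_fiberwise Finset.univ sstar (G.cost sstar)]
  rw [hfib1, hfib2, Finset.mul_sum]
  exact Finset.sum_le_sum fun f _ => group f
end
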